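/- arXiv:1110.6251 — 4 statements merged into one kernel-verified Lean document; each statement's English description precedes it below -/
import Mathlib

section
/- Let q ≥ 2 and let s be a nonnegative integer with s < q³, write s = tq + r with 0 ≤ r < q and suppose r ≤ t (so that s is a nongap of the semigroup generated by q and q+1). Then ∑_{i=0}^{q-1} max(q² − i + ((s+i) mod q) − ⌊(s+i)/q⌋, 0) = (q−r)(q²+r−t) + r·max(q²+r−q−t−1, 0). -/
/-- For `q ≥ 2` and a nongap `s = t*q + r < q³` (with `0 ≤ r < q`, `r ≤ t`) of the
semigroup generated by `q` and `q+1`,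
`∑_{i=0}^{q-1} max(q² − i + ((s+i) mod q) − ⌊(s+i)/q⌋, 0)
  = (q−r)(q²+r−t) + r·max(q²+r−q−t−1, 0)`. -/
theorem stmt_3 (q : ℕ) (hq : 2 ≤ q) (s t r : ℤ)
    (hr0 : 0 ≤ r) (hrq : r < q) (hrt : r ≤ t) (hs : s = t * q + r) (hsq : s < q ^ 3) :
    ∑ i ∈ Finset.range q, max ((q : ℤ) ^ 2 - i + (s + i) % q - (s + i) / q) 0
      = (q - r) * (q ^ 2 + r - t) + r * max ((q : ℤ) ^ 2 + r - q - t - 1) 0 := by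
  obtain ⟨rn, rfl⟩ : ∃ n : ℕ, r = (n : ℤ) := ⟨r.toNat, (Int.toNat_of_nonneg hr0).symm⟩
  have hrn : rn < q := by exact_mod_cast hrq
  have hq0 : (0:ℤ) < q := by positivity
  have htq : t < (q:ℤ)^2 := by nlinarith
  rw [Finset.range_eq_Ico, ← Finset.sum_Ico_consecutive _ (Nat.zero_le (q - rn)) (Nat.sub_le q rn)]
  have h1 : ∀ i ∈ Finset.Ico 0 (q - rn),
      max ((q : ℤ) ^ 2 - i + (s + i) % q - (s + i) / q) 0 = (q:ℤ)^2 + rn - t := by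
    intro i hi
    simp only [Finset.mem_Ico] at hi
    have hlt : (rn:ℤ) + i < q := by
      have h : i + rn < q := by omega
      have := (Nat.cast_lt (α := ℤ)).2 h
      push_cast at this; linarith
    have hrep : s + (i:ℤ) = ((rn:ℤ) + i) + (q:ℤ) * t := by rw [hs]; ring
    rw [hrep, Int.add_mul_emod_self_left, Int.add_mul_ediv_left _ _ (by positivity : (q:ℤ) ≠ 0),
      Int.emod_eq_of_lt (by positivity) hlt, Int.ediv_eq_zero_of_lt (by positivity) hlt]
    rw [max_eq_left (by linarith)]
    ring
  have h2 : ∀ i ∈ Finset.Ico (q - rn) q,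
      max ((q : ℤ) ^ 2 - i + (s + i) % q - (s + i) / q) 0
        = max ((q : ℤ) ^ 2 + rn - q - t - 1) 0 := by
    intro i hi
    simp only [Finset.mem_Ico] at hi
    have hge : (0:ℤ) ≤ (rn:ℤ) + i - q := by
      have : q ≤ i + rn := by omega
      have := (Nat.cast_le (α := ℤ)).2 this
      push_cast at this ⊢; linarith
    have hlt : (rn:ℤ) + i - q < q := by
      have : (i:ℤ) < q := by exact_mod_cast hi.2
      linarith
    have hrep : s + (i:ℤ) = ((rn:ℤ) + i - q) + (q:ℤ) * (t + 1) := by rw [hs]; ring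
    rw [hrep, Int.add_mul_emod_self_left, Int.add_mul_ediv_left _ _ (by positivity : (q:ℤ) ≠ 0),
      Int.emod_eq_of_lt hge hlt, Int.ediv_eq_zero_of_lt hge hlt]
    congr 1
    ring
  rw [Finset.sum_congr rfl h1, Finset.sum_congr rfl h2, Finset.sum_const, Finset.sum_const]
  simp only [Nat.card_Ico, nsmul_eq_mul, Nat.sub_zero]
  have h3 : ((q - rn : ℕ) : ℤ) = (q:ℤ) - rn := by
    rw [Nat.cast_sub hrn.le]
  have h4 : ((q - (q - rn) : ℕ) : ℤ) = (rn:ℤ) := by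
    have : q - (q - rn) = rn := by omega
    rw [this]
  rw [h3, h4]
end

section
/- Let q ≥ 2 and define for a nongap s = tq + r (0 ≤ r < q, r ≤ t, s < q³) the quantity ν(s) = (q−r)(q²+r−t) + r·max(q²+r−q−t−1, 0). Then ν(s) ≥ q³ − s. -/
/-- For `q ≥ 2` and a nongap `s = t*q + r < q³` (with `0 ≤ r < q`, `r ≤ t`),
`ν(s) = (q−r)(q²+r−t) + r·max(q²+r−q−t−1,0) ≥ q³ − s`. -/
theorem stmt_4 (q : ℕ) (hq : 2 ≤ q) (s t r : ℤ)
    (hr0 : 0 ≤ r) (hrq : r < q) (hrt : r ≤ t) (hs : s = t * q + r) (hsq : s < q ^ 3) :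
    (q - r) * ((q : ℤ) ^ 2 + r - t) + r * max ((q : ℤ) ^ 2 + r - q - t - 1) 0
      ≥ (q : ℤ) ^ 3 - s := by
  rcases le_or_gt 0 ((q:ℤ) ^ 2 + r - q - t - 1) with h | h
  · rw [max_eq_left h]; nlinarith
  · rw [max_eq_right h.le]
    nlinarith [mul_nonneg hr0 (by linarith : (0:ℤ) ≤ t + q + 1 - q ^ 2 - r)]
end

section
/- Let q ≥ 2 and let u = aq + b with 0 ≤ b < q, b ≤ a (so u is a nongap), and u < q³. Define ν(s) = q³ − tq + r·max(−1, t − q² + q − r) for a nongap s = tq + r with 0 ≤ r < q, r ≤ t. Then the minimum of ν(s) over all nongaps s ≤ u equals q³ − aq if b ≤ a − (q² − q), and equals q³ − u if b > a − (q² − q). -/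
/-- For `q ≥ 2` and a nongap `u = a*q + b < q³` (with `0 ≤ b < q`, `b ≤ a`), the minimum
of `ν(s) = q³ − t·q + r·max(−1, t−q²+q−r)` over all nongaps `s = t*q + r ≤ u`
is `q³ − a*q` if `b ≤ a − (q²−q)` and `q³ − u` otherwise. -/
theorem stmt_6 (q : ℕ) (hq : 2 ≤ q) (a b : ℤ)
    (hb0 : 0 ≤ b) (hbq : b < q) (hba : b ≤ a) (hu : a * q + b < (q : ℤ) ^ 3) :
    IsLeast
      {v : ℤ | ∃ t r : ℤ, 0 ≤ r ∧ r < q ∧ r ≤ t ∧ t * q + r ≤ a * q + b ∧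
        v = (q : ℤ) ^ 3 - t * q + r * max (-1) (t - q ^ 2 + q - r)}
      (if b ≤ a - ((q : ℤ) ^ 2 - q) then (q : ℤ) ^ 3 - a * q else (q : ℤ) ^ 3 - (a * q + b)) := by
  have hq' : (2 : ℤ) ≤ (q : ℤ) := by exact_mod_cast hq
  constructor
  · -- membership
    split_ifs with h
    · refine ⟨a, 0, le_refl 0, by linarith, by linarith, by linarith, by ring⟩
    · push_neg at h
      have h2 : a - (q : ℤ) ^ 2 + q - b ≤ -1 := by
        have := Int.lt_iff_add_one_le.mp (show a - (q : ℤ) ^ 2 + q - b < 0 by linarith)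
        linarith
      refine ⟨a, b, hb0, hbq, hba, le_refl _, ?_⟩
      rw [max_eq_left h2]; ring
  · rintro v ⟨t, r, hr0, hrq, hrt, hle, rfl⟩
    have hta : t ≤ a := by
      by_contra hc
      push_neg at hc
      have h1 : (a + 1) * q ≤ t * q :=
        mul_le_mul_of_nonneg_right (by linarith) (by linarith)
      nlinarith
    have htq : t * q ≤ a * q := mul_le_mul_of_nonneg_right hta (by linarith)
    rcases le_or_gt (t - (q : ℤ) ^ 2 + q - r) (-1) with hv | hv
    · rw [max_eq_left hv]
      split_ifs with h
      · have ht1 : t ≤ a - 1 := by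
          by_contra hc
          push_neg at hc
          have hat : a ≤ t := by linarith
          have : a * q ≤ t * q := mul_le_mul_of_nonneg_right hat (by linarith)
          linarith
        have : t * q ≤ (a - 1) * q := mul_le_mul_of_nonneg_right ht1 (by linarith)
        nlinarith
      · linarith
    · rw [max_eq_right (by linarith : (-1 : ℤ) ≤ t - (q : ℤ) ^ 2 + q - r)]
      have hv0 : 0 ≤ t - (q : ℤ) ^ 2 + q - r := by linarith
      have := mul_nonneg hr0 hv0
      split_ifs with h <;> linarith
end

section
/- Let q be a prime power and J ⊆ F_{q²}[x,y]/(y^q + y − x^{q+1}) the ideal of functions vanishing at all q³ affine rational points of the Hermitian curve. Then J is generated as an ideal by x^{q²} − x, and the quotient ring R/J has dimension q³ over F_{q²}. -/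
/-!
Evaluation at the rational points identifies `F[x,y] ⧸ J` with `F ^ N`, `N` the number of points:
distinct points give distinct, hence comaximal, maximal ideals, so the Chinese remainder theorem
applies. `N = q³`: the additive map `b ↦ b ^ q + b` has kernel of size at most `q` and image
inside the fixed points of `c ↦ c ^ q`, again at most `q` of them; as the two sizes multiply to
`q²`, the image is exactly that fixed set, which contains every norm `a ^ (q + 1)`. So each of
the `q²` values of `x` has exactly `q` values of `y` above it.

Modulo `I = (y ^ q + y - x ^ (q + 1), x ^ q² - x)` the monomials `x ^ i * y ^ j` with `i < q²`,
`j < q` span, so `dim F[x,y] ⧸ I ≤ q³`. As `I ≤ J`, the surjection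
`F[x,y] ⧸ I → F[x,y] ⧸ J` is then injective, i.e. `I = J`.
-/

open Finset Function

namespace MvPolynomial

variable {K σ ι : Type*} [Field K]

lemma ker_eval_injective : Injective fun v : σ → K => RingHom.ker (eval v) := by
  intro v w h
  funext s
  have hv : X s - C (v s) ∈ RingHom.ker (eval (R := K) v) := by simp
  have : X s - C (v s) ∈ RingHom.ker (eval (R := K) w) := by simpa only [← h] using hv
  simpa [sub_eq_zero, eq_comm] using this

lemma isMaximal_ker_eval (v : σ → K) : (RingHom.ker (eval v)).IsMaximal :=
  RingHom.ker_isMaximal_of_surjective _ fun a => ⟨C a, eval_C a⟩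

lemma pairwise_isCoprime_ker_eval {v : ι → σ → K} (hv : Injective v) :
    Pairwise (IsCoprime on fun i => RingHom.ker (eval (v i))) := fun i j hij =>
  have := isMaximal_ker_eval (v i)
  have := isMaximal_ker_eval (v j)
  Ideal.isCoprime_of_isMaximal (ker_eval_injective.ne (hv.ne hij))

lemma finrank_quotient_iInf_ker_eval [Finite ι] {v : ι → σ → K} (hv : Injective v) :
    Module.finrank K (MvPolynomial σ K ⧸ ⨅ i, RingHom.ker (eval (v i))) = Nat.card ι := by
  have := Fintype.ofFinite ι
  have hker : RingHom.ker (AlgHom.pi fun i => aeval (R := K) (v i)) =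
      ⨅ i, RingHom.ker (eval (v i)) := by
    ext f
    rw [RingHom.mem_ker, Ideal.mem_iInf, _root_.funext_iff]
    simp
  have hsurj : Surjective (AlgHom.pi fun i => aeval (R := K) (v i)) := fun c => by
    obtain ⟨f, hf⟩ := Ideal.exists_forall_sub_mem_ideal (pairwise_isCoprime_ker_eval hv)
      fun i => C (c i)
    refine ⟨f, _root_.funext fun i => ?_⟩
    simpa [sub_eq_zero] using hf i
  rw [← hker, (Ideal.quotientKerAlgEquivOfSurjective hsurj).toLinearEquiv.finrank_eq,
    Module.finrank_fintype_fun_eq_card, Nat.card_eq_fintype_card]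

lemma submodule_eq_top_of_mul_X_mem {R : Type*} [CommSemiring R]
    (M : Submodule R (MvPolynomial σ R)) (h1 : 1 ∈ M) (hX : ∀ p ∈ M, ∀ i, p * X i ∈ M) :
    M = ⊤ := by
  ext f
  simp only [Submodule.mem_top, iff_true]
  induction f using MvPolynomial.induction_on with
  | C a => simpa [smul_eq_C_mul] using M.smul_mem a h1
  | add p r hp hr => exact M.add_mem hp hr
  | mul_X p i hp => exact hX p hp i

end MvPolynomial

lemma Ideal.eq_of_le_of_finrank_quotient_le {K R : Type*} [Field K] [CommRing R] [Algebra K R]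
    {I J : Ideal R} (hIJ : I ≤ J) [Module.Finite K (R ⧸ I)]
    (h : Module.finrank K (R ⧸ I) ≤ Module.finrank K (R ⧸ J)) : I = J := by
  let φ := (Ideal.Quotient.factorₐ K hIJ).toLinearMap
  have hsurj : Surjective φ := Ideal.Quotient.factor_surjective hIJ
  have := Module.Finite.of_surjective φ hsurj
  have hinj : Injective φ :=
    (LinearMap.injective_iff_surjective_of_finrank_eq_finrank
      (h.antisymm (LinearMap.finrank_le_finrank_of_surjective hsurj))).mpr hsurj
  refine hIJ.antisymm fun f hf => ?_
  rw [← Ideal.Quotient.eq_zero_iff_mem] at hf ⊢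
  exact hinj (by simpa [φ] using hf)

section MonomialSpan

variable (K : Type*) {A : Type*} [CommRing K] [CommRing A] [Algebra K A]

def monomialSpan (x y : A) (m n : ℕ) : Submodule K A :=
  Submodule.span K (Set.range fun ij : Fin m × Fin n => x ^ (ij.1 : ℕ) * y ^ (ij.2 : ℕ))

variable {K} {x y : A} {m n : ℕ}

lemma pow_mul_pow_mem_monomialSpan {i j : ℕ} (hi : i < m) (hj : j < n) :
    x ^ i * y ^ j ∈ monomialSpan K x y m n :=
  Submodule.subset_span ⟨(⟨i, hi⟩, ⟨j, hj⟩), rfl⟩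

lemma mul_left_mem_monomialSpan_of_pow_eq_self (hx : x ^ m = x) (hm : 1 < m) {v : A}
    (hv : v ∈ monomialSpan K x y m n) : x * v ∈ monomialSpan K x y m n := by
  induction hv using Submodule.span_induction with
  | mem _ h =>
    obtain ⟨⟨⟨i, hi⟩, ⟨j, hj⟩⟩, rfl⟩ := h
    dsimp only
    rw [← mul_assoc, ← pow_succ']
    obtain hi' | hi' : i + 1 < m ∨ i + 1 = m := by omega
    · exact pow_mul_pow_mem_monomialSpan hi' hj
    · rw [hi', hx]
      simpa using pow_mul_pow_mem_monomialSpan (K := K) (x := x) (y := y) hm hj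
  | zero => simp
  | add _ _ _ _ hu hv => simpa [mul_add] using add_mem hu hv
  | smul a _ _ hv => simpa [mul_smul_comm] using Submodule.smul_mem _ a hv

lemma pow_mem_monomialSpan (hx : x ^ m = x) (hm : 1 < m) (hn : 0 < n) (a : ℕ) :
    x ^ a ∈ monomialSpan K x y m n := by
  induction a with
  | zero =>
    simpa using pow_mul_pow_mem_monomialSpan (K := K) (x := x) (y := y) (i := 0) (j := 0)
      (by omega) hn
  | succ a ih => simpa [pow_succ'] using mul_left_mem_monomialSpan_of_pow_eq_self hx hm ih

lemma mul_left_mem_monomialSpan_of_pow_add_self (hx : x ^ m = x) (hm : 1 < m)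
    (hy : y ^ n + y = x ^ (n + 1)) (hn : 1 < n) {v : A} (hv : v ∈ monomialSpan K x y m n) :
    y * v ∈ monomialSpan K x y m n := by
  induction hv using Submodule.span_induction with
  | mem _ h =>
    obtain ⟨⟨⟨i, hi⟩, ⟨j, hj⟩⟩, rfl⟩ := h
    dsimp only
    rw [mul_left_comm, ← pow_succ']
    obtain hj' | hj' : j + 1 < n ∨ j + 1 = n := by omega
    · exact pow_mul_pow_mem_monomialSpan hi hj'
    · have : x ^ i * y ^ n = x ^ (i + n + 1) - x ^ i * y ^ 1 := by
        rw [eq_sub_of_add_eq hy]; ring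
      rw [hj', this]
      exact sub_mem (pow_mem_monomialSpan hx hm (by omega) _)
        (pow_mul_pow_mem_monomialSpan hi hn)
  | zero => simp
  | add _ _ _ _ hu hv => simpa [mul_add] using add_mem hu hv
  | smul a _ _ hv => simpa [mul_smul_comm] using Submodule.smul_mem _ a hv

end MonomialSpan

lemma card_filter_pow_eq_mul_le {K : Type*} [CommRing K] [IsDomain K] [Fintype K]
    [DecidableEq K] {q : ℕ} (hq : 1 < q) (c : K) : #{x | x ^ q = c * x} ≤ q := by
  open Polynomial in
  have hdeg : (X ^ q - C c * X : K[X]).natDegree = q := by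
    rw [natDegree_sub_eq_left_of_natDegree_lt] <;>
      simp only [natDegree_X_pow]
    exact (natDegree_C_mul_le c X).trans_lt (by simpa using hq)
  open Polynomial in
  calc #{x | x ^ q = c * x} ≤ (X ^ q - C c * X : K[X]).natDegree :=
        card_le_degree_of_subset_roots fun x hx => by
          simpa [mem_roots (ne_zero_of_natDegree_gt (hdeg ▸ hq)), sub_eq_zero] using hx
    _ = q := hdeg

namespace Hermitian

section Trace

variable {F : Type*} [Field F] [Fintype F] {q : ℕ} (hq : IsPrimePow q)
  (hF : Fintype.card F = q ^ 2)

include hq hF in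
lemma add_pow_char (a b : F) : (a + b) ^ q = a ^ q + b ^ q := by
  obtain ⟨p, k, hp, -, rfl⟩ := hq
  have := Fact.mk hp.nat_prime
  have : CharP F p := charP_of_card_eq_prime_pow (f := k * 2) (by rw [hF, pow_mul])
  exact add_pow_char_pow a b p k

include hF in
lemma pow_sq_eq_self (a : F) : a ^ q ^ 2 = a :=
  hF ▸ FiniteField.pow_card a

def trace : F →+ F := AddMonoidHom.mk' (fun b => b ^ q + b) fun a b => by
  rw [add_pow_char hq hF]; ring

@[simp] lemma trace_apply (b : F) : trace hq hF b = b ^ q + b := rfl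

lemma trace_pow_eq_self (b : F) : trace hq hF b ^ q = trace hq hF b := by
  rw [trace_apply, add_pow_char hq hF, ← pow_mul, ← sq, pow_sq_eq_self hF, add_comm]

include hF in
lemma norm_pow_eq_self (a : F) : (a ^ (q + 1)) ^ q = a ^ (q + 1) := by
  rw [← pow_mul, add_one_mul, pow_add, ← sq, pow_sq_eq_self hF, pow_succ, mul_comm]

variable [DecidableEq F]

lemma card_ker_trace_le : #{b | trace hq hF b = 0} ≤ q := by
  simpa [add_eq_zero_iff_eq_neg] using card_filter_pow_eq_mul_le (K := F) hq.one_lt (-1)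

lemma card_image_trace_mul_card_ker :
    #(univ.image (trace hq hF)) * #{b | trace hq hF b = 0} = q ^ 2 := by
  have hfiber : ∀ c ∈ univ.image (trace hq hF),
      #{b | trace hq hF b = c} = #{b | trace hq hF b = 0} := fun c hc => by
    obtain ⟨b, -, rfl⟩ := mem_image.mp hc
    exact AddMonoidHom.card_fiber_eq_of_mem_range _ ⟨b, rfl⟩ ⟨0, map_zero _⟩
  have := card_eq_sum_card_image (trace hq hF) univ
  rw [card_univ, hF, sum_congr rfl hfiber, sum_const, smul_eq_mul] at this
  exact this.symm

lemma image_trace_subset : univ.image (trace hq hF) ⊆ ({c | c ^ q = c} : Finset F) :=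
    fun c hc => by
  obtain ⟨b, -, rfl⟩ := mem_image.mp hc
  simpa using trace_pow_eq_self hq hF b

lemma card_ker_trace : #{b | trace hq hF b = 0} = q := by
  have himage : #(univ.image (trace hq hF)) ≤ q :=
    (card_le_card (image_trace_subset hq hF)).trans
      (by simpa using card_filter_pow_eq_mul_le hq.one_lt (1 : F))
  have hker := card_ker_trace_le hq hF
  have hmul := card_image_trace_mul_card_ker hq hF
  nlinarith

lemma image_trace : univ.image (trace hq hF) = ({c | c ^ q = c} : Finset F) := by
  refine eq_of_subset_of_card_le (image_trace_subset hq hF) ?_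
  have hmul := card_image_trace_mul_card_ker hq hF
  rw [card_ker_trace, sq, Nat.mul_left_inj hq.ne_zero] at hmul
  simpa [hmul] using card_filter_pow_eq_mul_le hq.one_lt (1 : F)

lemma pow_succ_mem_range_trace (a : F) : a ^ (q + 1) ∈ Set.range (trace hq hF) := by
  have : a ^ (q + 1) ∈ univ.image (trace hq hF) := by
    simpa [image_trace] using norm_pow_eq_self hF a
  simpa using this

omit [DecidableEq F] in
include hq hF in
lemma card_points : Nat.card {p : F × F | p.2 ^ q + p.2 = p.1 ^ (q + 1)} = q ^ 3 := by
  classical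
  rw [Set.coe_ofPred,
    Nat.card_congr (Equiv.subtypeProdEquivSigmaSubtype fun a b => b ^ q + b = a ^ (q + 1)),
    Nat.card_eq_fintype_card, Fintype.card_sigma]
  have hfiber (a : F) : Fintype.card {b : F // b ^ q + b = a ^ (q + 1)} = q := by
    rw [Fintype.card_subtype]
    exact (AddMonoidHom.card_fiber_eq_of_mem_range _ (pow_succ_mem_range_trace hq hF a)
      ⟨0, map_zero _⟩).trans (card_ker_trace hq hF)
  simp only [hfiber, sum_const, card_univ, hF, smul_eq_mul]
  ring

end Trace

section Ideals

open MvPolynomial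

variable (F : Type*) [Field F] (q : ℕ)

noncomputable def vanishingIdeal : Ideal (MvPolynomial (Fin 2) F) :=
  ⨅ p ∈ {p : F × F | p.2 ^ q + p.2 = p.1 ^ (q + 1)},
    RingHom.ker (eval fun k => if k = 0 then p.1 else p.2)

noncomputable def equationIdeal : Ideal (MvPolynomial (Fin 2) F) :=
  Ideal.span {X 1 ^ q + X 1 - X 0 ^ (q + 1), X 0 ^ q ^ 2 - X 0}

variable {F q}

lemma equationIdeal_le_vanishingIdeal [Fintype F] (hF : Fintype.card F = q ^ 2) :
    equationIdeal F q ≤ vanishingIdeal F q := by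
  rw [equationIdeal, Ideal.span_le]
  rintro f (rfl | rfl) <;>
    simp only [vanishingIdeal, SetLike.mem_coe, Ideal.mem_iInf, RingHom.mem_ker] <;> intro p hp
  · simpa [sub_eq_zero] using hp
  · simp [pow_sq_eq_self hF]

lemma finrank_quotient_vanishingIdeal [Fintype F] (hq : IsPrimePow q)
    (hF : Fintype.card F = q ^ 2) :
    Module.finrank F (MvPolynomial (Fin 2) F ⧸ vanishingIdeal F q) = q ^ 3 := by
  rw [vanishingIdeal, iInf_subtype', MvPolynomial.finrank_quotient_iInf_ker_eval,
    card_points hq hF]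
  intro p p' h
  ext
  · simpa using congrFun h 0
  · simpa using congrFun h 1

lemma monomialSpan_eq_top (hq : IsPrimePow q) :
    monomialSpan F (Ideal.Quotient.mk (equationIdeal F q) (X 0))
      (Ideal.Quotient.mk (equationIdeal F q) (X 1)) (q ^ 2) q = ⊤ := by
  set I := equationIdeal F q
  set x := Ideal.Quotient.mk I (X 0)
  set y := Ideal.Quotient.mk I (X 1)
  set M := monomialSpan F x y (q ^ 2) q
  have hx : x ^ q ^ 2 = x := by
    rw [← sub_eq_zero, ← map_pow, ← map_sub, Ideal.Quotient.eq_zero_iff_mem]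
    exact Ideal.subset_span (by simp)
  have hy : y ^ q + y = x ^ (q + 1) := by
    rw [← sub_eq_zero, ← map_pow, ← map_pow, ← map_add, ← map_sub,
      Ideal.Quotient.eq_zero_iff_mem]
    exact Ideal.subset_span (by simp)
  have hm : 1 < q ^ 2 := Nat.one_lt_pow two_ne_zero hq.one_lt
  have h1 : (1 : MvPolynomial (Fin 2) F) ∈ M.comap (Ideal.Quotient.mkₐ F I).toLinearMap := by
    simpa using pow_mul_pow_mem_monomialSpan (K := F) (x := x) (y := y) (i := 0) (j := 0)
      (by omega) hq.pos
  have hcomap := MvPolynomial.submodule_eq_top_of_mul_X_mem _ h1 fun p hp i => by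
    fin_cases i
    · simpa [mul_comm] using mul_left_mem_monomialSpan_of_pow_eq_self hx hm hp
    · simpa [mul_comm] using mul_left_mem_monomialSpan_of_pow_add_self hx hm hy hq.one_lt hp
  refine eq_top_iff.mpr fun z _ => ?_
  obtain ⟨f, rfl⟩ := Ideal.Quotient.mk_surjective z
  exact (Submodule.eq_top_iff'.mp hcomap f :)

end Ideals

end Hermitian

/-- For the Hermitian curve `E : y^q + y = x^{q+1}` over the field `F` with `q²`
elements, the ideal `J` of polynomials vanishing at all `q³` affine rational points
equals the span of `E` and `x^{q²} − x` (i.e., in the coordinate ring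
`R = F[x,y]/(E)`, the image of `J` is generated by `x^{q²} − x`), and the quotient
has `F`-dimension `q³`. -/
theorem stmt_15 (q : ℕ) (hq : IsPrimePow q)
    (F : Type*) [Field F] [Fintype F] (hF : Fintype.card F = q ^ 2)
    (E : MvPolynomial (Fin 2) F)
    (hE : E = (MvPolynomial.X 1) ^ q + MvPolynomial.X 1 - (MvPolynomial.X 0) ^ (q + 1))
    (J : Ideal (MvPolynomial (Fin 2) F))
    (hJ : J = ⨅ p ∈ {p : F × F | p.2 ^ q + p.2 = p.1 ^ (q + 1)},
      RingHom.ker (MvPolynomial.eval (fun k => if k = 0 then p.1 else p.2))) :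
    J = Ideal.span {E, (MvPolynomial.X 0) ^ (q ^ 2) - MvPolynomial.X 0} ∧
    Module.finrank F (MvPolynomial (Fin 2) F ⧸ J) = q ^ 3 := by
  subst hE hJ
  change Hermitian.vanishingIdeal F q = Hermitian.equationIdeal F q ∧ _
  have hspan := Hermitian.monomialSpan_eq_top (F := F) hq
  have : Module.Finite F (MvPolynomial (Fin 2) F ⧸ Hermitian.equationIdeal F q) :=
    Module.finite_def.mpr (hspan ▸ Submodule.fg_span (Set.finite_range _))
  have hrankJ := Hermitian.finrank_quotient_vanishingIdeal hq hF
  have hrankI := finrank_le_of_span_eq_top hspan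
  rw [Fintype.card_prod, Fintype.card_fin, Fintype.card_fin, ← pow_succ] at hrankI
  exact ⟨(Ideal.eq_of_le_of_finrank_quotient_le (Hermitian.equationIdeal_le_vanishingIdeal hF)
    (hrankI.trans hrankJ.ge)).symm, hrankJ⟩
end
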